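/- If D is a double category with folding whose holonomy is fully faithful, then the folding Λ : D → Q(H D) is an isomorphism of double categories. -/

import Mathlib

set_option linter.unusedVariables false

/-! Core definitions: strict 2-categories and strict double categories. -/

universe u v w x u' v' w' x' u'' v'' w'' x''

/-- A (strict) 2-category, given by explicit data.  The 1-dimensional category
laws are included as propositional fields; the 2-dimensional laws are collected
in `TwoCat.Laws`. -/
structure TwoCat where
  Obj : Type u
  Hom : Obj → Obj → Type v
  Cell : ∀ {a b : Obj}, Hom a b → Hom a b → Type w
  hid : ∀ a, Hom a a
  hcomp : ∀ {a b c}, Hom a b → Hom b c → Hom a c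
  hid_comp : ∀ {a b} (f : Hom a b), hcomp (hid a) f = f
  hcomp_id : ∀ {a b} (f : Hom a b), hcomp f (hid b) = f
  hassoc : ∀ {a b c d} (f : Hom a b) (g : Hom b c) (h : Hom c d),
    hcomp (hcomp f g) h = hcomp f (hcomp g h)
  cid : ∀ {a b} (f : Hom a b), Cell f f
  vcomp : ∀ {a b} {f g h : Hom a b}, Cell f g → Cell g h → Cell f h
  hcomp₂ : ∀ {a b c} {f f' : Hom a b} {g g' : Hom b c},
    Cell f f' → Cell g g' → Cell (hcomp f g) (hcomp f' g')

namespace TwoCat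

/-- Transport a 2-cell along equalities of its boundary 1-cells. -/
def recast (K : TwoCat) {a b : K.Obj} {f f' g g' : K.Hom a b}
    (hf : f = f') (hg : g = g') (α : K.Cell f g) : K.Cell f' g' := by
  cases hf; cases hg; exact α

/-- The 2-dimensional laws of a strict 2-category. -/
structure Laws (K : TwoCat) : Prop where
  vcomp_cid : ∀ {a b} {f g : K.Hom a b} (α : K.Cell f g), K.vcomp α (K.cid g) = α
  cid_vcomp : ∀ {a b} {f g : K.Hom a b} (α : K.Cell f g), K.vcomp (K.cid f) α = α
  vcomp_assoc : ∀ {a b} {f g h i : K.Hom a b} (α : K.Cell f g) (β : K.Cell g h)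
    (γ : K.Cell h i), K.vcomp (K.vcomp α β) γ = K.vcomp α (K.vcomp β γ)
  hcomp₂_cid : ∀ {a b c} (f : K.Hom a b) (g : K.Hom b c),
    K.hcomp₂ (K.cid f) (K.cid g) = K.cid (K.hcomp f g)
  interchange : ∀ {a b c} {f f' f'' : K.Hom a b} {g g' g'' : K.Hom b c}
    (α : K.Cell f f') (α' : K.Cell f' f'') (β : K.Cell g g') (β' : K.Cell g' g''),
    K.hcomp₂ (K.vcomp α α') (K.vcomp β β') = K.vcomp (K.hcomp₂ α β) (K.hcomp₂ α' β')
  hcomp₂_assoc : ∀ {a b c d} {f f' : K.Hom a b} {g g' : K.Hom b c} {h h' : K.Hom c d}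
    (α : K.Cell f f') (β : K.Cell g g') (γ : K.Cell h h'),
    HEq (K.hcomp₂ (K.hcomp₂ α β) γ) (K.hcomp₂ α (K.hcomp₂ β γ))
  id_hcomp₂ : ∀ {a b} {f f' : K.Hom a b} (α : K.Cell f f'),
    HEq (K.hcomp₂ (K.cid (K.hid a)) α) α
  hcomp₂_id : ∀ {a b} {f f' : K.Hom a b} (α : K.Cell f f'),
    HEq (K.hcomp₂ α (K.cid (K.hid b))) α

/-- The same 2-category with 2-cells reversed. -/
def co (K : TwoCat) : TwoCat where
  Obj := K.Obj
  Hom := K.Hom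
  Cell f g := K.Cell g f
  hid := K.hid
  hcomp := K.hcomp
  hid_comp := K.hid_comp
  hcomp_id := K.hcomp_id
  hassoc := K.hassoc
  cid := K.cid
  vcomp α β := K.vcomp β α
  hcomp₂ α β := K.hcomp₂ α β

end TwoCat

/-- A (strict) double category, given by explicit data.  The 1-dimensional
category laws for horizontal and vertical morphisms are included; the
square-level laws are collected in `DoubleCat.Laws`. -/
structure DoubleCat where
  Obj : Type u
  Hor : Obj → Obj → Type v
  Ver : Obj → Obj → Type w
  Sq : ∀ {a b c d : Obj}, Hor a b → Ver a c → Ver b d → Hor c d → Type x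
  hId : ∀ a, Hor a a
  hComp : ∀ {a b c}, Hor a b → Hor b c → Hor a c
  vId : ∀ a, Ver a a
  vComp : ∀ {a b c}, Ver a b → Ver b c → Ver a c
  hId_comp : ∀ {a b} (f : Hor a b), hComp (hId a) f = f
  hComp_id : ∀ {a b} (f : Hor a b), hComp f (hId b) = f
  hAssoc : ∀ {a b c d} (f : Hor a b) (g : Hor b c) (h : Hor c d),
    hComp (hComp f g) h = hComp f (hComp g h)
  vId_comp : ∀ {a b} (j : Ver a b), vComp (vId a) j = j
  vComp_id : ∀ {a b} (j : Ver a b), vComp j (vId b) = j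
  vAssoc : ∀ {a b c d} (j : Ver a b) (k : Ver b c) (l : Ver c d),
    vComp (vComp j k) l = vComp j (vComp k l)
  idSqV : ∀ {a b} (f : Hor a b), Sq f (vId a) (vId b) f
  idSqH : ∀ {a b} (j : Ver a b), Sq (hId a) j j (hId b)
  hCompSq : ∀ {a b c a' b' c'} {f : Hor a b} {g : Hor b c} {j : Ver a a'}
    {k : Ver b b'} {l : Ver c c'} {f' : Hor a' b'} {g' : Hor b' c'},
    Sq f j k f' → Sq g k l g' → Sq (hComp f g) j l (hComp f' g')
  vCompSq : ∀ {a b c d e e'} {f : Hor a b} {j : Ver a c} {k : Ver b d}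
    {g : Hor c d} {j' : Ver c e} {k' : Ver d e'} {h : Hor e e'},
    Sq f j k g → Sq g j' k' h → Sq f (vComp j j') (vComp k k') h

namespace DoubleCat

/-- Transport a square along equalities of its four boundaries. -/
def recast (D : DoubleCat) {a b c d : D.Obj} {f f' : D.Hor a b} {j j' : D.Ver a c}
    {k k' : D.Ver b d} {g g' : D.Hor c d} (hf : f = f') (hj : j = j') (hk : k = k')
    (hg : g = g') (α : D.Sq f j k g) : D.Sq f' j' k' g' := by
  cases hf; cases hj; cases hk; cases hg; exact α

/-- The square-level laws of a strict double category. -/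
structure Laws (D : DoubleCat) : Prop where
  hCompSq_assoc : ∀ {a₁ a₂ a₃ a₄ b₁ b₂ b₃ b₄} {f₁ : D.Hor a₁ a₂} {f₂ : D.Hor a₂ a₃}
    {f₃ : D.Hor a₃ a₄} {j₁ : D.Ver a₁ b₁} {j₂ : D.Ver a₂ b₂} {j₃ : D.Ver a₃ b₃}
    {j₄ : D.Ver a₄ b₄} {g₁ : D.Hor b₁ b₂} {g₂ : D.Hor b₂ b₃} {g₃ : D.Hor b₃ b₄}
    (α : D.Sq f₁ j₁ j₂ g₁) (β : D.Sq f₂ j₂ j₃ g₂) (γ : D.Sq f₃ j₃ j₄ g₃),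
    HEq (D.hCompSq (D.hCompSq α β) γ) (D.hCompSq α (D.hCompSq β γ))
  idSqH_hComp : ∀ {a b c d} {f : D.Hor a b} {j : D.Ver a c} {k : D.Ver b d}
    {g : D.Hor c d} (α : D.Sq f j k g), HEq (D.hCompSq (D.idSqH j) α) α
  hComp_idSqH : ∀ {a b c d} {f : D.Hor a b} {j : D.Ver a c} {k : D.Ver b d}
    {g : D.Hor c d} (α : D.Sq f j k g), HEq (D.hCompSq α (D.idSqH k)) α
  vCompSq_assoc : ∀ {a₁ b₁ a₂ b₂ a₃ b₃ a₄ b₄} {f₁ : D.Hor a₁ b₁} {f₂ : D.Hor a₂ b₂}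
    {f₃ : D.Hor a₃ b₃} {f₄ : D.Hor a₄ b₄} {j₁ : D.Ver a₁ a₂} {j₂ : D.Ver a₂ a₃}
    {j₃ : D.Ver a₃ a₄} {k₁ : D.Ver b₁ b₂} {k₂ : D.Ver b₂ b₃} {k₃ : D.Ver b₃ b₄}
    (α : D.Sq f₁ j₁ k₁ f₂) (β : D.Sq f₂ j₂ k₂ f₃) (γ : D.Sq f₃ j₃ k₃ f₄),
    HEq (D.vCompSq (D.vCompSq α β) γ) (D.vCompSq α (D.vCompSq β γ))
  idSqV_vComp : ∀ {a b c d} {f : D.Hor a b} {j : D.Ver a c} {k : D.Ver b d}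
    {g : D.Hor c d} (α : D.Sq f j k g), HEq (D.vCompSq (D.idSqV f) α) α
  vComp_idSqV : ∀ {a b c d} {f : D.Hor a b} {j : D.Ver a c} {k : D.Ver b d}
    {g : D.Hor c d} (α : D.Sq f j k g), HEq (D.vCompSq α (D.idSqV g)) α
  interchange : ∀ {a₁ a₂ a₃ b₁ b₂ b₃ c₁ c₂ c₃} {f₁ : D.Hor a₁ a₂} {f₂ : D.Hor a₂ a₃}
    {g₁ : D.Hor b₁ b₂} {g₂ : D.Hor b₂ b₃} {h₁ : D.Hor c₁ c₂} {h₂ : D.Hor c₂ c₃}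
    {j₁ : D.Ver a₁ b₁} {j₂ : D.Ver a₂ b₂} {j₃ : D.Ver a₃ b₃}
    {k₁ : D.Ver b₁ c₁} {k₂ : D.Ver b₂ c₂} {k₃ : D.Ver b₃ c₃}
    (α : D.Sq f₁ j₁ j₂ g₁) (β : D.Sq f₂ j₂ j₃ g₂)
    (α' : D.Sq g₁ k₁ k₂ h₁) (β' : D.Sq g₂ k₂ k₃ h₂),
    D.hCompSq (D.vCompSq α α') (D.vCompSq β β')
      = D.vCompSq (D.hCompSq α β) (D.hCompSq α' β')
  idSqH_vComp : ∀ {a b c} (j : D.Ver a b) (j' : D.Ver b c),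
    D.vCompSq (D.idSqH j) (D.idSqH j') = D.idSqH (D.vComp j j')
  idSqV_hComp : ∀ {a b c} (f : D.Hor a b) (g : D.Hor b c),
    D.hCompSq (D.idSqV f) (D.idSqV g) = D.idSqV (D.hComp f g)

/-- The horizontal 2-category of a double category. -/
def H (D : DoubleCat) : TwoCat where
  Obj := D.Obj
  Hom := D.Hor
  Cell f g := D.Sq f (D.vId _) (D.vId _) g
  hid := D.hId
  hcomp := D.hComp
  hid_comp := D.hId_comp
  hcomp_id := D.hComp_id
  hassoc := D.hAssoc
  cid := D.idSqV
  vcomp α β := D.recast rfl (D.vId_comp _) (D.vId_comp _) rfl (D.vCompSq α β)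
  hcomp₂ := D.hCompSq

/-- The vertical 2-category of a double category. -/
def V (D : DoubleCat) : TwoCat where
  Obj := D.Obj
  Hom := D.Ver
  Cell j k := D.Sq (D.hId _) j k (D.hId _)
  hid := D.vId
  hcomp := D.vComp
  hid_comp := D.vId_comp
  hcomp_id := D.vComp_id
  hassoc := D.vAssoc
  cid := D.idSqH
  vcomp α β := D.recast (D.hId_comp _) rfl rfl (D.hId_comp _) (D.hCompSq α β)
  hcomp₂ := D.vCompSq

end DoubleCat
namespace TwoCat

/-- The double category of direct quintets of a 2-category. -/
def Quintet (K : TwoCat) : DoubleCat where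
  Obj := K.Obj
  Hor := K.Hom
  Ver := K.Hom
  Sq f j k g := K.Cell (K.hcomp f k) (K.hcomp j g)
  hId := K.hid
  hComp := K.hcomp
  vId := K.hid
  vComp := K.hcomp
  hId_comp := K.hid_comp
  hComp_id := K.hcomp_id
  hAssoc := K.hassoc
  vId_comp := K.hid_comp
  vComp_id := K.hcomp_id
  vAssoc := K.hassoc
  idSqV f := K.recast (K.hcomp_id f).symm (K.hid_comp f).symm (K.cid f)
  idSqH j := K.recast (K.hid_comp j).symm (K.hcomp_id j).symm (K.cid j)
  hCompSq {a b c a' b' c'} {f g j k l f' g'} α β :=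
    K.recast (K.hassoc f g l).symm (K.hassoc j f' g')
      (K.vcomp (K.hcomp₂ (K.cid f) β)
        (K.recast (K.hassoc f k g') rfl (K.hcomp₂ α (K.cid g'))))
  vCompSq {a b c d e e'} {f j k g j' k' h} α β :=
    K.recast rfl (K.hassoc j j' h).symm
      (K.vcomp (K.recast (K.hassoc f k k') (K.hassoc j g k') (K.hcomp₂ α (K.cid k')))
        (K.hcomp₂ (K.cid j) β))

/-- The double category of inverse quintets of a 2-category. -/
def InvQuintet (K : TwoCat) : DoubleCat where
  Obj := K.Obj
  Hor := K.Hom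
  Ver a b := K.Hom b a
  Sq {a b c d} f j k g := K.Cell (K.hcomp j f) (K.hcomp g k)
  hId := K.hid
  hComp := K.hcomp
  vId := K.hid
  vComp j k := K.hcomp k j
  hId_comp := K.hid_comp
  hComp_id := K.hcomp_id
  hAssoc := K.hassoc
  vId_comp j := K.hcomp_id j
  vComp_id j := K.hid_comp j
  vAssoc j k l := (K.hassoc l k j).symm
  idSqV f := K.recast (K.hid_comp f).symm (K.hcomp_id f).symm (K.cid f)
  idSqH j := K.recast (K.hcomp_id j).symm (K.hid_comp j).symm (K.cid j)
  hCompSq {a b c a' b' c'} {f g j k l f' g'} α β :=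
    K.recast rfl (K.hassoc f' g' l).symm
      (K.vcomp (K.recast (K.hassoc j f g) (K.hassoc f' k g) (K.hcomp₂ α (K.cid g)))
        (K.hcomp₂ (K.cid f') β))
  vCompSq {a b c d e e'} {f j k g j' k' h} α β :=
    K.recast (K.hassoc j' j f).symm (K.hassoc h k' k)
      (K.vcomp (K.hcomp₂ (K.cid j') α)
        (K.recast (K.hassoc j' g k) rfl (K.hcomp₂ β (K.cid k))))

end TwoCat

/-- A (strict) double functor: the data.  The strict preservation laws are
collected in `DoubleFunctor.Laws`. -/
structure DoubleFunctor (C : DoubleCat) (D : DoubleCat) where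
  obj : C.Obj → D.Obj
  hmap : ∀ {a b}, C.Hor a b → D.Hor (obj a) (obj b)
  vmap : ∀ {a b}, C.Ver a b → D.Ver (obj a) (obj b)
  smap : ∀ {a b c d} {f : C.Hor a b} {j : C.Ver a c} {k : C.Ver b d}
    {g : C.Hor c d}, C.Sq f j k g → D.Sq (hmap f) (vmap j) (vmap k) (hmap g)

namespace DoubleFunctor

variable {C D E : DoubleCat}

/-- A double functor strictly preserves identities and compositions. -/
structure Laws (F : DoubleFunctor C D) : Prop where
  hmap_id : ∀ a, F.hmap (C.hId a) = D.hId (F.obj a)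
  hmap_comp : ∀ {a b c} (f : C.Hor a b) (g : C.Hor b c),
    F.hmap (C.hComp f g) = D.hComp (F.hmap f) (F.hmap g)
  vmap_id : ∀ a, F.vmap (C.vId a) = D.vId (F.obj a)
  vmap_comp : ∀ {a b c} (j : C.Ver a b) (k : C.Ver b c),
    F.vmap (C.vComp j k) = D.vComp (F.vmap j) (F.vmap k)
  smap_idSqV : ∀ {a b} (f : C.Hor a b), HEq (F.smap (C.idSqV f)) (D.idSqV (F.hmap f))
  smap_idSqH : ∀ {a b} (j : C.Ver a b), HEq (F.smap (C.idSqH j)) (D.idSqH (F.vmap j))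
  smap_hComp : ∀ {a b c a' b' c'} {f : C.Hor a b} {g : C.Hor b c} {j : C.Ver a a'}
    {k : C.Ver b b'} {l : C.Ver c c'} {f' : C.Hor a' b'} {g' : C.Hor b' c'}
    (α : C.Sq f j k f') (β : C.Sq g k l g'),
    HEq (F.smap (C.hCompSq α β)) (D.hCompSq (F.smap α) (F.smap β))
  smap_vComp : ∀ {a b c d e e'} {f : C.Hor a b} {j : C.Ver a c} {k : C.Ver b d}
    {g : C.Hor c d} {j' : C.Ver c e} {k' : C.Ver d e'} {h : C.Hor e e'}
    (α : C.Sq f j k g) (β : C.Sq g j' k' h),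
    HEq (F.smap (C.vCompSq α β)) (D.vCompSq (F.smap α) (F.smap β))

/-- The identity double functor. -/
def idF (C : DoubleCat) : DoubleFunctor C C where
  obj a := a
  hmap f := f
  vmap j := j
  smap s := s

/-- Composition of double functors (diagrammatic order). -/
def comp (F : DoubleFunctor C D) (G : DoubleFunctor D E) : DoubleFunctor C E where
  obj a := G.obj (F.obj a)
  hmap f := G.hmap (F.hmap f)
  vmap j := G.vmap (F.vmap j)
  smap s := G.smap (F.smap s)

end DoubleFunctor

/-- A horizontal natural transformation between double functors (data). -/
structure HorNatTrans {C D : DoubleCat} (F G : DoubleFunctor C D) where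
  app : ∀ a, D.Hor (F.obj a) (G.obj a)
  sq : ∀ {a b} (j : C.Ver a b), D.Sq (app a) (F.vmap j) (G.vmap j) (app b)

namespace HorNatTrans

variable {C D : DoubleCat} {F G : DoubleFunctor C D}

structure Laws (θ : HorNatTrans F G) : Prop where
  sq_id : ∀ a, HEq (θ.sq (C.vId a)) (D.idSqV (θ.app a))
  sq_comp : ∀ {a b c} (j : C.Ver a b) (j' : C.Ver b c),
    HEq (θ.sq (C.vComp j j')) (D.vCompSq (θ.sq j) (θ.sq j'))
  natural_hor : ∀ {a b} (f : C.Hor a b),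
    D.hComp (F.hmap f) (θ.app b) = D.hComp (θ.app a) (G.hmap f)
  natural : ∀ {a b c d} {f : C.Hor a b} {j : C.Ver a c} {k : C.Ver b d}
    {g : C.Hor c d} (α : C.Sq f j k g),
    HEq (D.hCompSq (F.smap α) (θ.sq k)) (D.hCompSq (θ.sq j) (G.smap α))

end HorNatTrans

/-- A vertical natural transformation between double functors (data plus laws). -/
structure VertNatTrans {C D : DoubleCat} (F G : DoubleFunctor C D) where
  app : ∀ a, D.Ver (F.obj a) (G.obj a)
  sq : ∀ {a b} (f : C.Hor a b), D.Sq (F.hmap f) (app a) (app b) (G.hmap f)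

namespace VertNatTrans

variable {C D : DoubleCat} {F G : DoubleFunctor C D}

structure Laws (θ : VertNatTrans F G) : Prop where
  sq_id : ∀ a, HEq (θ.sq (C.hId a)) (D.idSqH (θ.app a))
  sq_comp : ∀ {a b c} (f : C.Hor a b) (g : C.Hor b c),
    HEq (θ.sq (C.hComp f g)) (D.hCompSq (θ.sq f) (θ.sq g))
  natural_ver : ∀ {a b} (j : C.Ver a b),
    D.vComp (F.vmap j) (θ.app b) = D.vComp (θ.app a) (G.vmap j)
  natural : ∀ {a b c d} {f : C.Hor a b} {j : C.Ver a c} {k : C.Ver b d}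
    {g : C.Hor c d} (α : C.Sq f j k g),
    HEq (D.vCompSq (F.smap α) (θ.sq g)) (D.vCompSq (θ.sq f) (G.smap α))

end VertNatTrans

/-- A horizontal double adjunction `F ⊣ G` : an internal adjunction in the
2-category of double categories, double functors and horizontal natural
transformations, presented by unit and counit and triangle identities. -/
structure HorDoubleAdj {X A : DoubleCat} (F : DoubleFunctor X A) (G : DoubleFunctor A X) where
  F_laws : F.Laws
  G_laws : G.Laws
  unit : HorNatTrans (DoubleFunctor.idF X) (F.comp G)
  counit : HorNatTrans (G.comp F) (DoubleFunctor.idF A)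
  unit_laws : unit.Laws
  counit_laws : counit.Laws
  triangleF_obj : ∀ a, A.hComp (F.hmap (unit.app a)) (counit.app (F.obj a)) = A.hId (F.obj a)
  triangleF_sq : ∀ {a b} (j : X.Ver a b),
    HEq (A.hCompSq (F.smap (unit.sq j)) (counit.sq (F.vmap j))) (A.idSqH (F.vmap j))
  triangleG_obj : ∀ a, X.hComp (unit.app (G.obj a)) (G.hmap (counit.app a)) = X.hId (G.obj a)
  triangleG_sq : ∀ {a b} (k : A.Ver a b),
    HEq (X.hCompSq (unit.sq (G.vmap k)) (G.smap (counit.sq k))) (X.idSqH (G.vmap k))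

/-- A vertical double adjunction `F ⊣ G` (F vertical left double adjoint). -/
structure VertDoubleAdj {X A : DoubleCat} (F : DoubleFunctor X A) (G : DoubleFunctor A X) where
  F_laws : F.Laws
  G_laws : G.Laws
  unit : VertNatTrans (DoubleFunctor.idF X) (F.comp G)
  counit : VertNatTrans (G.comp F) (DoubleFunctor.idF A)
  unit_laws : unit.Laws
  counit_laws : counit.Laws
  triangleF_obj : ∀ a, A.vComp (F.vmap (unit.app a)) (counit.app (F.obj a)) = A.vId (F.obj a)
  triangleF_sq : ∀ {a b} (f : X.Hor a b),
    HEq (A.vCompSq (F.smap (unit.sq f)) (counit.sq (F.hmap f))) (A.idSqV (F.hmap f))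
  triangleG_obj : ∀ a, X.vComp (unit.app (G.obj a)) (G.vmap (counit.app a)) = X.vId (G.obj a)
  triangleG_sq : ∀ {a b} (g : A.Hor a b),
    HEq (X.vCompSq (unit.sq (G.hmap g)) (G.smap (counit.sq g))) (X.idSqV (G.hmap g))

namespace DoubleCat

variable {D : DoubleCat}

/-- The set of squares with fixed left vertical boundary `j` and fixed right
vertical boundary `k` (with varying top and bottom). -/
def SqSet (D : DoubleCat) {a b c d : D.Obj} (j : D.Ver a c) (k : D.Ver b d) :
    Type _ :=
  Σ (f : D.Hor a b) (g : D.Hor c d), D.Sq f j k g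

/-- Horizontal composition of elements of `SqSet`. -/
def SqSet.hcomp {a b c a' b' c' : D.Obj} {j : D.Ver a a'} {k : D.Ver b b'}
    {l : D.Ver c c'} (x : D.SqSet j k) (y : D.SqSet k l) : D.SqSet j l :=
  ⟨D.hComp x.1 y.1, D.hComp x.2.1 y.2.1, D.hCompSq x.2.2 y.2.2⟩

/-- Vertical composition of elements of `SqSet` (given that the bottom of the
first is the top of the second). -/
def SqSet.vcomp {a b c d e e' : D.Obj} {j : D.Ver a c} {k : D.Ver b d}
    {j' : D.Ver c e} {k' : D.Ver d e'} (x : D.SqSet j k) (y : D.SqSet j' k')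
    (h : x.2.1 = y.1) : D.SqSet (D.vComp j j') (D.vComp k k') :=
  ⟨x.1, y.2.1, D.vCompSq x.2.2 (D.recast h.symm rfl rfl rfl y.2.2)⟩

end DoubleCat

namespace DoubleFunctor

variable {C D : DoubleCat}

/-- The image of a `SqSet` element under a double functor. -/
def mapSqSet (F : DoubleFunctor C D) {a b c d : C.Obj} {j : C.Ver a c}
    {k : C.Ver b d} (x : C.SqSet j k) : D.SqSet (F.vmap j) (F.vmap k) :=
  ⟨F.hmap x.1, F.hmap x.2.1, F.smap x.2.2⟩

/-- Post-composition with a square `μ` from a vertical morphism `j` to `S`. -/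
def inducedMap (S : DoubleFunctor D C) {a a' : C.Obj} {r r' : D.Obj}
    {j : C.Ver a a'} {k : D.Ver r r'} (μ : C.SqSet j (S.vmap k))
    {d d' : D.Obj} (l : D.Ver d d') (x : D.SqSet k l) : C.SqSet j (S.vmap l) :=
  DoubleCat.SqSet.hcomp μ (S.mapSqSet x)

/-- `μ` is a (horizontally) universal square from the vertical morphism `j`
to the double functor `S`. -/
def IsUniversalFrom (S : DoubleFunctor D C) {a a' : C.Obj} {r r' : D.Obj}
    {j : C.Ver a a'} {k : D.Ver r r'} (μ : C.SqSet j (S.vmap k)) : Prop :=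
  ∀ {d d' : D.Obj} (l : D.Ver d d'), Function.Bijective (S.inducedMap μ l)

end DoubleFunctor
namespace TwoCat

/-- Transport a 1-cell along equalities of objects. -/
def castHom (K : TwoCat) {a a' b b' : K.Obj} (h1 : a = a') (h2 : b = b')
    (f : K.Hom a b) : K.Hom a' b' := by
  cases h1; cases h2; exact f

/-- The double category `ℍ K` with horizontal 2-category `K` and only trivial
vertical morphisms. -/
def HDouble (K : TwoCat) : DoubleCat where
  Obj := K.Obj
  Hor := K.Hom
  Ver a b := PLift (a = b)
  Sq {a b c d} f j k g := K.Cell f (K.castHom j.down.symm k.down.symm g)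
  hId := K.hid
  hComp := K.hcomp
  vId a := ⟨rfl⟩
  vComp j k := ⟨j.down.trans k.down⟩
  hId_comp := K.hid_comp
  hComp_id := K.hcomp_id
  hAssoc := K.hassoc
  vId_comp j := rfl
  vComp_id j := rfl
  vAssoc j k l := rfl
  idSqV f := K.cid f
  idSqH j := by
    obtain ⟨hj⟩ := j; cases hj; exact K.cid (K.hid _)
  hCompSq {a b c a' b' c'} {f g j k l f' g'} α β := by
    obtain ⟨hj⟩ := j; obtain ⟨hk⟩ := k; obtain ⟨hl⟩ := l
    cases hj; cases hk; cases hl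
    exact K.vcomp (K.hcomp₂ α (K.cid g)) (K.hcomp₂ (K.cid f') β)
  vCompSq {a b c d e e'} {f j k g j' k' h} α β := by
    obtain ⟨hj⟩ := j; obtain ⟨hk⟩ := k; obtain ⟨hj'⟩ := j'; obtain ⟨hk'⟩ := k'
    cases hj; cases hk; cases hj'; cases hk'
    exact K.vcomp α β

end TwoCat

/-- A 2-functor (data).  The strict preservation laws are collected in
`TwoFunctor.Laws`. -/
structure TwoFunctor (K L : TwoCat) where
  obj : K.Obj → L.Obj
  hmap : ∀ {a b}, K.Hom a b → L.Hom (obj a) (obj b)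
  cmap : ∀ {a b} {f g : K.Hom a b}, K.Cell f g → L.Cell (hmap f) (hmap g)

namespace TwoFunctor

variable {K L M : TwoCat}

structure Laws (F : TwoFunctor K L) : Prop where
  hmap_id : ∀ a, F.hmap (K.hid a) = L.hid (F.obj a)
  hmap_comp : ∀ {a b c} (f : K.Hom a b) (g : K.Hom b c),
    F.hmap (K.hcomp f g) = L.hcomp (F.hmap f) (F.hmap g)
  cmap_cid : ∀ {a b} (f : K.Hom a b), F.cmap (K.cid f) = L.cid (F.hmap f)
  cmap_vcomp : ∀ {a b} {f g h : K.Hom a b} (α : K.Cell f g) (β : K.Cell g h),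
    F.cmap (K.vcomp α β) = L.vcomp (F.cmap α) (F.cmap β)
  cmap_hcomp₂ : ∀ {a b c} {f f' : K.Hom a b} {g g' : K.Hom b c}
    (α : K.Cell f f') (β : K.Cell g g'),
    HEq (F.cmap (K.hcomp₂ α β)) (L.hcomp₂ (F.cmap α) (F.cmap β))

/-- The identity 2-functor. -/
def idF (K : TwoCat) : TwoFunctor K K := ⟨fun a => a, fun f => f, fun α => α⟩

/-- Composition of 2-functors (diagrammatic order). -/
def comp (F : TwoFunctor K L) (G : TwoFunctor L M) : TwoFunctor K M :=
  ⟨fun a => G.obj (F.obj a), fun f => G.hmap (F.hmap f), fun α => G.cmap (F.cmap α)⟩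

end TwoFunctor

/-- The double functor `ℍ S : ℍ K → ℍ L` induced by a 2-functor `S`. -/
def TwoFunctor.HFun {K L : TwoCat} (S : TwoFunctor K L) :
    DoubleFunctor K.HDouble L.HDouble where
  obj := S.obj
  hmap := S.hmap
  vmap j := ⟨congrArg S.obj j.down⟩
  smap {a b c d} {f j k g} α := by
    obtain ⟨hj⟩ := j; obtain ⟨hk⟩ := k
    cases hj; cases hk
    exact S.cmap α
namespace DoubleCat

/-- A folding on a double category: a holonomy 2-functor together with
bijections between squares and globular squares (2-cells of the horizontal
2-category), compatible with all compositions and identities. -/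
structure Folding (D : DoubleCat) where
  hol : ∀ {a b}, D.Ver a b → D.Hor a b
  hol_id : ∀ a, hol (D.vId a) = D.hId a
  hol_comp : ∀ {a b c} (j : D.Ver a b) (k : D.Ver b c),
    hol (D.vComp j k) = D.hComp (hol j) (hol k)
  fold : ∀ {a b c d} {f : D.Hor a b} {j : D.Ver a c} {k : D.Ver b d}
    {g : D.Hor c d}, D.Sq f j k g →
    D.Sq (D.hComp f (hol k)) (D.vId a) (D.vId d) (D.hComp (hol j) g)
  fold_bij : ∀ {a b c d} (f : D.Hor a b) (j : D.Ver a c) (k : D.Ver b d)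
    (g : D.Hor c d), Function.Bijective (fun α : D.Sq f j k g => fold α)
  fold_id : ∀ {a b} {f g : D.Hor a b} (α : D.Sq f (D.vId a) (D.vId b) g),
    HEq (fold α) α
  fold_hComp : ∀ {a b c a' b' c'} {f₁ : D.Hor a b} {f₂ : D.Hor b c}
    {j : D.Ver a a'} {k : D.Ver b b'} {l : D.Ver c c'} {g₁ : D.Hor a' b'}
    {g₂ : D.Hor b' c'} (α : D.Sq f₁ j k g₁) (β : D.Sq f₂ k l g₂),
    HEq (fold (D.hCompSq α β))
      (D.vCompSq (D.hCompSq (D.idSqV f₁) (fold β))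
        (D.recast (D.hAssoc f₁ (hol k) g₂) rfl rfl rfl
          (D.hCompSq (fold α) (D.idSqV g₂))))
  fold_vComp : ∀ {a b c d e e'} {f : D.Hor a b} {j₁ : D.Ver a c}
    {k₁ : D.Ver b d} {g : D.Hor c d} {j₂ : D.Ver c e} {k₂ : D.Ver d e'}
    {h : D.Hor e e'} (α : D.Sq f j₁ k₁ g) (β : D.Sq g j₂ k₂ h),
    HEq (fold (D.vCompSq α β))
      (D.vCompSq (D.hCompSq (fold α) (D.idSqV (hol k₂)))
        (D.recast (D.hAssoc (hol j₁) g (hol k₂)).symm rfl rfl rfl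
          (D.hCompSq (D.idSqV (hol j₁)) (fold β))))
  fold_idSqH : ∀ {a b} (j : D.Ver a b), HEq (fold (D.idSqH j)) (D.idSqV (hol j))

end DoubleCat

/-- Compatibility of a double functor with foldings. -/
structure FoldCompat {C D : DoubleCat} (F : DoubleFunctor C D)
    (ΛC : C.Folding) (ΛD : D.Folding) : Prop where
  hol : ∀ {a b} (j : C.Ver a b), F.hmap (ΛC.hol j) = ΛD.hol (F.vmap j)
  fold : ∀ {a b c d} {f : C.Hor a b} {j : C.Ver a c} {k : C.Ver b d}
    {g : C.Hor c d} (α : C.Sq f j k g),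
    HEq (F.smap (ΛC.fold α)) (ΛD.fold (F.smap α))

/-- Compatibility of a horizontal natural transformation with foldings. -/
structure FoldCompatTrans {C D : DoubleCat} {F G : DoubleFunctor C D}
    (ΛC : C.Folding) (ΛD : D.Folding) (θ : HorNatTrans F G) : Prop where
  bound : ∀ {a b} (j : C.Ver a b),
    D.hComp (θ.app a) (G.hmap (ΛC.hol j))
      = D.hComp (F.hmap (ΛC.hol j)) (θ.app b)
  fold : ∀ {a b} (j : C.Ver a b),
    HEq (ΛD.fold (θ.sq j))
      (D.idSqV (D.hComp (θ.app a) (G.hmap (ΛC.hol j))))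

/-- A 2-natural transformation between 2-functors (data). -/
structure TwoNatTrans {K L : TwoCat} (F G : TwoFunctor K L) where
  app : ∀ a, L.Hom (F.obj a) (G.obj a)

namespace TwoNatTrans

variable {K L : TwoCat} {F G : TwoFunctor K L}

structure Laws (θ : TwoNatTrans F G) : Prop where
  natural_hom : ∀ {a b} (f : K.Hom a b),
    L.hcomp (F.hmap f) (θ.app b) = L.hcomp (θ.app a) (G.hmap f)
  natural_cell : ∀ {a b} {f g : K.Hom a b} (α : K.Cell f g),
    HEq (L.hcomp₂ (F.cmap α) (L.cid (θ.app b)))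
        (L.hcomp₂ (L.cid (θ.app a)) (G.cmap α))

end TwoNatTrans

/-- A (strict) 2-adjunction `F ⊣ G`. -/
structure TwoAdjunction {X A : TwoCat} (F : TwoFunctor X A) (G : TwoFunctor A X) where
  F_laws : F.Laws
  G_laws : G.Laws
  unit : TwoNatTrans (TwoFunctor.idF X) (F.comp G)
  counit : TwoNatTrans (G.comp F) (TwoFunctor.idF A)
  unit_laws : unit.Laws
  counit_laws : counit.Laws
  triangleF : ∀ a, A.hcomp (F.hmap (unit.app a)) (counit.app (F.obj a)) = A.hid (F.obj a)
  triangleG : ∀ a, X.hcomp (unit.app (G.obj a)) (G.hmap (counit.app a)) = X.hid (G.obj a)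

/-- The horizontal 2-functor of a double functor. -/
def DoubleFunctor.toH {C D : DoubleCat} (F : DoubleFunctor C D) (hF : F.Laws) :
    TwoFunctor C.H D.H where
  obj := F.obj
  hmap := F.hmap
  cmap α := D.recast rfl (hF.vmap_id _) (hF.vmap_id _) rfl (F.smap α)

/-- The vertical 2-functor of a double functor. -/
def DoubleFunctor.toV {C D : DoubleCat} (F : DoubleFunctor C D) (hF : F.Laws) :
    TwoFunctor C.V D.V where
  obj := F.obj
  hmap := F.vmap
  cmap α := D.recast (hF.hmap_id _) rfl rfl (hF.hmap_id _) (F.smap α)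
/-- The double functor `Λ : D → 𝔔(𝐇D)` determined by a folding. -/
def DoubleCat.Folding.toFunctor {D : DoubleCat} (Λ : D.Folding) :
    DoubleFunctor D (TwoCat.Quintet D.H) where
  obj a := a
  hmap f := f
  vmap j := Λ.hol j
  smap α := Λ.fold α

/-- A double functor is an isomorphism of double categories when it is
bijective on objects, on horizontal and vertical morphisms, and on squares. -/
def DoubleFunctor.IsIso {C D : DoubleCat} (F : DoubleFunctor C D) : Prop :=
  Function.Bijective F.obj ∧
  (∀ {a b : C.Obj}, Function.Bijective (fun f : C.Hor a b => F.hmap f)) ∧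
  (∀ {a b : C.Obj}, Function.Bijective (fun j : C.Ver a b => F.vmap j)) ∧
  (∀ {a b c d : C.Obj} (f : C.Hor a b) (j : C.Ver a c) (k : C.Ver b d)
    (g : C.Hor c d), Function.Bijective (fun α : C.Sq f j k g => F.smap α))


/-! The folding axioms say that `fold` sends identity squares and composites of squares to the
corresponding quintets, up to transport along the associativity and unit laws of horizontal
composition; since transport is heterogeneously the identity, `Λ` is a strict double functor.
It is the identity on objects and horizontal morphisms, bijective on squares by the definition
of a folding, and bijective on vertical morphisms exactly when the holonomy is fully faithful. -/

namespace TwoCat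

theorem recast_heq (K : TwoCat) {a b : K.Obj} {f f' g g' : K.Hom a b}
    (hf : f = f') (hg : g = g') (α : K.Cell f g) :
    HEq (K.recast hf hg α) α := by
  subst hf hg; rfl

theorem quintet_hCompSq_heq (K : TwoCat) {a b c a' b' c' : K.Obj} {f : K.Hom a b}
    {g : K.Hom b c} {j : K.Hom a a'} {k : K.Hom b b'} {l : K.Hom c c'} {f' : K.Hom a' b'}
    {g' : K.Hom b' c'} (α : K.Quintet.Sq f j k f') (β : K.Quintet.Sq g k l g') :
    HEq (K.Quintet.hCompSq α β)
      (K.vcomp (K.hcomp₂ (K.cid f) β) (K.recast (K.hassoc f k g') rfl (K.hcomp₂ α (K.cid g')))) :=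
  K.recast_heq _ _ _

theorem quintet_vCompSq_heq (K : TwoCat) {a b c d e e' : K.Obj} {f : K.Hom a b}
    {j : K.Hom a c} {k : K.Hom b d} {g : K.Hom c d} {j' : K.Hom c e} {k' : K.Hom d e'}
    {h : K.Hom e e'} (α : K.Quintet.Sq f j k g) (β : K.Quintet.Sq g j' k' h) :
    HEq (K.Quintet.vCompSq α β)
      (K.vcomp (K.recast (K.hassoc f k k') (K.hassoc j g k') (K.hcomp₂ α (K.cid k')))
        (K.hcomp₂ (K.cid j) β)) := by
  dsimp only [Quintet]
  exact K.recast_heq _ _ _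

end TwoCat

namespace DoubleCat

theorem recast_heq (D : DoubleCat) {a b c d : D.Obj} {f f' : D.Hor a b}
    {j j' : D.Ver a c} {k k' : D.Ver b d} {g g' : D.Hor c d}
    (hf : f = f') (hj : j = j') (hk : k = k') (hg : g = g') (α : D.Sq f j k g) :
    HEq (D.recast hf hj hk hg α) α := by
  subst hf hj hk hg; rfl

theorem vCompSq_congr_heq (D : DoubleCat) {a b c d e e' : D.Obj}
    {f f' : D.Hor a b} {j j' : D.Ver a c} {k k' : D.Ver b d} {g g' : D.Hor c d}
    {j₂ j₂' : D.Ver c e} {k₂ k₂' : D.Ver d e'} {h h' : D.Hor e e'}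
    (hf : f = f') (hj : j = j') (hk : k = k') (hg : g = g')
    (hj₂ : j₂ = j₂') (hk₂ : k₂ = k₂') (hh : h = h')
    {α : D.Sq f j k g} {α' : D.Sq f' j' k' g'}
    {β : D.Sq g j₂ k₂ h} {β' : D.Sq g' j₂' k₂' h'}
    (hα : HEq α α') (hβ : HEq β β') :
    HEq (D.vCompSq α β) (D.vCompSq α' β') := by
  subst hf hj hk hg hj₂ hk₂ hh
  cases hα; cases hβ; rfl

theorem H_vcomp_heq (D : DoubleCat) {a b : D.Obj} {f g h : D.Hor a b}
    (α : D.H.Cell f g) (β : D.H.Cell g h) : HEq (D.H.vcomp α β) (D.vCompSq α β) := by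
  dsimp only [H]
  exact D.recast_heq _ _ _ _ _

namespace Folding

variable {D : DoubleCat} (Λ : D.Folding)

theorem toFunctor_smap_idSqV {a b : D.Obj} (f : D.Hor a b) :
    HEq (Λ.toFunctor.smap (D.idSqV f)) ((TwoCat.Quintet D.H).idSqV (Λ.toFunctor.hmap f)) :=
  (Λ.fold_id (D.idSqV f)).trans (D.H.recast_heq _ _ (D.idSqV f)).symm

theorem toFunctor_smap_idSqH {a b : D.Obj} (j : D.Ver a b) :
    HEq (Λ.toFunctor.smap (D.idSqH j)) ((TwoCat.Quintet D.H).idSqH (Λ.toFunctor.vmap j)) :=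
  (Λ.fold_idSqH j).trans (D.H.recast_heq _ _ (D.idSqV (Λ.hol j))).symm

theorem toFunctor_smap_hComp {a b c a' b' c' : D.Obj} {f : D.Hor a b} {g : D.Hor b c}
    {j : D.Ver a a'} {k : D.Ver b b'} {l : D.Ver c c'} {f' : D.Hor a' b'} {g' : D.Hor b' c'}
    (α : D.Sq f j k f') (β : D.Sq g k l g') :
    HEq (Λ.toFunctor.smap (D.hCompSq α β))
      ((TwoCat.Quintet D.H).hCompSq (Λ.toFunctor.smap α) (Λ.toFunctor.smap β)) := by
  refine (Λ.fold_hComp α β).trans (HEq.symm ?_)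
  refine (D.H.quintet_hCompSq_heq _ _).trans ((D.H_vcomp_heq _ _).trans ?_)
  exact D.vCompSq_congr_heq rfl rfl rfl rfl rfl rfl rfl HEq.rfl
    ((D.H.recast_heq _ _ _).trans (D.recast_heq _ _ _ _ _).symm)

theorem toFunctor_smap_vComp {a b c d e e' : D.Obj} {f : D.Hor a b} {j : D.Ver a c}
    {k : D.Ver b d} {g : D.Hor c d} {j' : D.Ver c e} {k' : D.Ver d e'} {h : D.Hor e e'}
    (α : D.Sq f j k g) (β : D.Sq g j' k' h) :
    HEq (Λ.toFunctor.smap (D.vCompSq α β))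
      ((TwoCat.Quintet D.H).vCompSq (Λ.toFunctor.smap α) (Λ.toFunctor.smap β)) := by
  refine (Λ.fold_vComp α β).trans (HEq.symm ?_)
  refine (D.H.quintet_vCompSq_heq _ _).trans ((D.H_vcomp_heq _ _).trans ?_)
  exact D.vCompSq_congr_heq (D.hAssoc _ _ _).symm rfl rfl (D.hAssoc _ _ _).symm rfl rfl rfl
    (D.H.recast_heq _ _ _) (D.recast_heq _ _ _ _ _).symm

theorem toFunctor_laws : Λ.toFunctor.Laws where
  hmap_id _ := rfl
  hmap_comp _ _ := rfl
  vmap_id := Λ.hol_id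
  vmap_comp := Λ.hol_comp
  smap_idSqV := Λ.toFunctor_smap_idSqV
  smap_idSqH := Λ.toFunctor_smap_idSqH
  smap_hComp := Λ.toFunctor_smap_hComp
  smap_vComp := Λ.toFunctor_smap_vComp

theorem toFunctor_isIso (ff : ∀ a b : D.Obj, Function.Bijective (fun j : D.Ver a b => Λ.hol j)) :
    Λ.toFunctor.IsIso :=
  ⟨Function.bijective_id, Function.bijective_id, ff _ _, Λ.fold_bij⟩

end Folding

end DoubleCat

theorem folding_with_fully_faithful_holonomy_is_iso_general
    (D : DoubleCat) (Λ : D.Folding)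
    (ff : ∀ a b : D.Obj, Function.Bijective (fun j : D.Ver a b => Λ.hol j)) :
    Λ.toFunctor.Laws ∧ Λ.toFunctor.IsIso :=
  ⟨Λ.toFunctor_laws, Λ.toFunctor_isIso ff⟩

/-- If `D` is a double category with a folding whose
holonomy is fully faithful, then the folding `Λ : D → 𝔔(𝐇D)` is an
isomorphism of double categories. -/
theorem folding_with_fully_faithful_holonomy_is_iso
    (D : DoubleCat) (hD : D.Laws) (Λ : D.Folding)
    (ff : ∀ a b : D.Obj, Function.Bijective (fun j : D.Ver a b => Λ.hol j)) :
    Λ.toFunctor.Laws ∧ Λ.toFunctor.IsIso :=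
  folding_with_fully_faithful_holonomy_is_iso_general D Λ ff
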